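/- Let I be a finite set of integer intervals and R a set of forbidden positions such that every interval in I contains at least one position not in R. The modified greedy algorithm — process intervals by increasing right endpoint, and whenever the current interval [l,r] is not yet hit, add the rightmost position of [l,r] \ R — produces a hitting set disjoint from R of minimum cardinality among all hitting sets of I disjoint from R. -/

import Mathlib

/-!
Exchange argument. Suppose all points chosen so far are `≤ b` and every interval not yet hit
starts after `b`. When greedy meets the first unhit interval `[l, r]`, it picks the rightmost
admissible point `x`; any valid hitting set `H'` must contain an admissible `y ∈ [l, r]`, so
`b < y ≤ x`. Because intervals come by increasing right endpoint, every later interval missed by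
`x` starts after `x`, so the invariant holds again with bound `x`, and greedy has paid one point
for the point `y` of `H'` lying in `(b, x]`. Hence greedy uses at most `#{y ∈ H' | b < y}` points.
-/

/-- The modified greedy interval-hitting algorithm with restricted positions `R`:
process intervals in order; whenever the current interval `[l, r]` is not yet hit
by the accumulated set `H`, add the rightmost position of `[l, r] \ R` to `H`. -/
noncomputable def greedyHitR (R : Finset ℤ) (H : Finset ℤ) : List (ℤ × ℤ) → Finset ℤ
  | [] => H
  | (l, r) :: rest =>
      if ((Finset.Icc l r).filter (· ∈ H)).Nonempty then greedyHitR R H rest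
      else
        if h : (Finset.Icc l r \ R).Nonempty then
          greedyHitR R (insert ((Finset.Icc l r \ R).max' h) H) rest
        else greedyHitR R H rest

open Finset

lemma filter_Icc_mem_nonempty_iff {H : Finset ℤ} {l r : ℤ} :
    ((Icc l r).filter (· ∈ H)).Nonempty ↔ ∃ x ∈ H, l ≤ x ∧ x ≤ r := by
  simp only [Finset.Nonempty, mem_filter, mem_Icc]
  grind

lemma card_filter_lt_add_one_le {α : Type*} [LinearOrder α] {s : Finset α} {b x y : α}
    (hbx : b ≤ x) (hy : y ∈ s) (hby : b < y) (hyx : y ≤ x) :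
    #(s.filter (x < ·)) + 1 ≤ #(s.filter (b < ·)) := by
  have hsub : s.filter (x < ·) ⊆ s.filter (b < ·) :=
    monotone_filter_right s fun _ _ hxz => hbx.trans_lt hxz
  refine card_lt_card ((ssubset_iff_of_subset hsub).mpr ⟨y, ?_, ?_⟩)
  · exact mem_filter.mpr ⟨hy, hby⟩
  · simpa only [mem_filter, not_and, not_lt] using fun _ => hyx

section

variable (R : Finset ℤ)

lemma subset_greedyHitR (I : List (ℤ × ℤ)) (H : Finset ℤ) : H ⊆ greedyHitR R H I := by
  induction I generalizing H with
  | nil => exact subset_rfl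
  | cons p rest ih =>
    obtain ⟨l, r⟩ := p
    rw [greedyHitR]
    split_ifs
    · exact ih H
    · exact (subset_insert _ _).trans (ih _)
    · exact ih H

lemma greedyHitR_hits (I : List (ℤ × ℤ)) (hfeas : ∀ p ∈ I, (Icc p.1 p.2 \ R).Nonempty)
    (H : Finset ℤ) : ∀ p ∈ I, ∃ x ∈ greedyHitR R H I, p.1 ≤ x ∧ x ≤ p.2 := by
  induction I generalizing H with
  | nil => simp
  | cons q rest ih =>
    obtain ⟨l, r⟩ := q
    have ih' := ih fun p hp => hfeas p (List.mem_cons_of_mem _ hp)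
    rintro p (_ | ⟨_, hp⟩)
    · rw [greedyHitR]
      split_ifs with hhit hne
      · obtain ⟨x, hxH, hx⟩ := filter_Icc_mem_nonempty_iff.mp hhit
        exact ⟨x, subset_greedyHitR R rest H hxH, hx⟩
      · have hx := mem_Icc.mp (mem_sdiff.mp (max'_mem _ hne)).1
        exact ⟨_, subset_greedyHitR R rest _ (mem_insert_self _ _), hx⟩
      · exact absurd (hfeas _ List.mem_cons_self) hne
    · rw [greedyHitR]
      split_ifs
      · exact ih' H p hp
      · exact ih' _ p hp
      · exact ih' H p hp

lemma greedyHitR_disjoint (I : List (ℤ × ℤ)) (H : Finset ℤ) (hH : Disjoint H R) :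
    Disjoint (greedyHitR R H I) R := by
  induction I generalizing H with
  | nil => exact hH
  | cons q rest ih =>
    obtain ⟨l, r⟩ := q
    rw [greedyHitR]
    split_ifs with _ hne
    · exact ih H hH
    · exact ih _ (disjoint_insert_left.mpr ⟨(mem_sdiff.mp (max'_mem _ hne)).2, hH⟩)
    · exact ih H hH

theorem card_greedyHitR_le (I : List (ℤ × ℤ)) (hsorted : I.Pairwise (fun p q => p.2 ≤ q.2))
    {H H' : Finset ℤ} {b : ℤ} (hHb : ∀ z ∈ H, z ≤ b)
    (hunhit : ∀ p ∈ I, (¬ ∃ x ∈ H, p.1 ≤ x ∧ x ≤ p.2) → b < p.1)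
    (hH' : ∀ p ∈ I, ∃ y ∈ H', p.1 ≤ y ∧ y ≤ p.2) (hH'R : Disjoint H' R) :
    #(greedyHitR R H I) ≤ #H + #(H'.filter (b < ·)) := by
  induction I generalizing H b with
  | nil => exact Nat.le_add_right _ _
  | cons q rest ih =>
    obtain ⟨l, r⟩ := q
    have hrest := List.pairwise_cons.mp hsorted
    have hH'rest := fun p hp => hH' p (List.mem_cons_of_mem _ hp)
    rw [greedyHitR]
    by_cases hhit : ((Icc l r).filter (· ∈ H)).Nonempty
    · rw [if_pos hhit]
      exact ih hrest.2 hHb (fun p hp => hunhit p (List.mem_cons_of_mem _ hp)) hH'rest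
    rw [filter_Icc_mem_nonempty_iff] at hhit
    have hbl : b < l := hunhit _ List.mem_cons_self hhit
    obtain ⟨y, hyH', hly, hyr⟩ := hH' _ List.mem_cons_self
    have hy : y ∈ Icc l r \ R :=
      mem_sdiff.mpr ⟨mem_Icc.mpr ⟨hly, hyr⟩, disjoint_left.mp hH'R hyH'⟩
    have hne : (Icc l r \ R).Nonempty := ⟨y, hy⟩
    rw [if_neg (filter_Icc_mem_nonempty_iff.not.mpr hhit), dif_pos hne]
    set x := (Icc l r \ R).max' hne
    have hyx : y ≤ x := le_max' _ y hy
    obtain ⟨hlx, hxr⟩ := mem_Icc.mp (mem_sdiff.mp (max'_mem _ hne)).1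
    have hxH : x ∉ H := fun hxH => hhit ⟨x, hxH, hlx, hxr⟩
    have hHx : ∀ z ∈ insert x H, z ≤ x := by
      simp only [mem_insert, forall_eq_or_imp]
      exact ⟨le_rfl, fun z hz => (hHb z hz).trans (hbl.le.trans hlx)⟩
    -- a later interval `[l', r']` has `x ≤ r ≤ r'`, so `x` misses it only if `x < l'`
    have hunhit' : ∀ p ∈ rest, (¬ ∃ z ∈ insert x H, p.1 ≤ z ∧ z ≤ p.2) → x < p.1 :=
      fun p hp hmiss => lt_of_not_ge fun hpx =>
        hmiss ⟨x, mem_insert_self _ _, hpx, hxr.trans (hrest.1 p hp)⟩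
    calc #(greedyHitR R (insert x H) rest)
        ≤ #(insert x H) + #(H'.filter (x < ·)) := ih hrest.2 hHx hunhit' hH'rest
      _ = #H + (#(H'.filter (x < ·)) + 1) := by rw [card_insert_of_notMem hxH]; ring
      _ ≤ #H + #(H'.filter (b < ·)) := by
        gcongr
        exact card_filter_lt_add_one_le (hbl.le.trans hlx) hyH' (hbl.trans_le hly) hyx

end

theorem greedy_restricted_hitting_set_minimal_general
    (I : List (ℤ × ℤ))
    (hsorted : I.Pairwise (fun p q => p.2 ≤ q.2))
    (R : Finset ℤ) (hfeas : ∀ p ∈ I, (Finset.Icc p.1 p.2 \ R).Nonempty) :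
    (∀ p ∈ I, ∃ x ∈ greedyHitR R ∅ I, p.1 ≤ x ∧ x ≤ p.2) ∧
    Disjoint (greedyHitR R ∅ I) R ∧
    (∀ H' : Finset ℤ, (∀ p ∈ I, ∃ x ∈ H', p.1 ≤ x ∧ x ≤ p.2) → Disjoint H' R →
      (greedyHitR R ∅ I).card ≤ H'.card) := by
  refine ⟨greedyHitR_hits R I hfeas ∅, greedyHitR_disjoint R I ∅ (disjoint_empty_left R),
    fun H' hH' hH'R => ?_⟩
  obtain ⟨b, hb⟩ := (I.map Prod.fst).toFinset.bddBelow
  have hbI : ∀ p ∈ I, b - 1 < p.1 := fun p hp =>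
    Int.sub_one_lt_iff.mpr (hb (by simpa using ⟨p.2, hp⟩))
  calc #(greedyHitR R ∅ I)
      ≤ #(∅ : Finset ℤ) + #(H'.filter (b - 1 < ·)) :=
        card_greedyHitR_le R I hsorted (by simp) (fun p hp _ => hbI p hp) hH' hH'R
    _ ≤ #H' := by simpa using card_filter_le _ _

/-- If every interval contains a position outside `R`, the modified greedy algorithm
produces a hitting set disjoint from `R` of minimum cardinality among all hitting
sets disjoint from `R`. -/
theorem greedy_restricted_hitting_set_minimal
    (I : List (ℤ × ℤ)) (hI : ∀ p ∈ I, p.1 ≤ p.2)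
    (hsorted : I.Pairwise (fun p q => p.2 ≤ q.2))
    (R : Finset ℤ) (hfeas : ∀ p ∈ I, (Finset.Icc p.1 p.2 \ R).Nonempty) :
    (∀ p ∈ I, ∃ x ∈ greedyHitR R ∅ I, p.1 ≤ x ∧ x ≤ p.2) ∧
    Disjoint (greedyHitR R ∅ I) R ∧
    (∀ H' : Finset ℤ, (∀ p ∈ I, ∃ x ∈ H', p.1 ≤ x ∧ x ≤ p.2) → Disjoint H' R →
      (greedyHitR R ∅ I).card ≤ H'.card) :=
  greedy_restricted_hitting_set_minimal_general I hsorted R hfeas
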